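/- Let x, y, z ∈ ℂ with x², y², z² ≠ μ where μ = x² + y² + z² - xyz, μ ∉ {0,4}, and ν = cosh⁻¹(1 - μ/2). With Ψ as defined via Ψ(u,v,w) = log[(uv + (e^ν - 1)w)/((u² - μ)^{1/2}(v² - μ)^{1/2})], one has Ψ(y,z,x) + Ψ(z,x,y) + Ψ(x,y,z) ≡ ν (mod 2πi). -/
import Mathlib


/-- The principal square root of a complex number (nonnegative real part). -/
noncomputable def csqrt (z : ℂ) : ℂ := z ^ ((1 : ℂ) / 2)

/-- The principal inverse hyperbolic cosine, with nonnegative real part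
and imaginary part in (-π, π]. -/
noncomputable def carccosh (z : ℂ) : ℂ :=
  Complex.log (z + csqrt (z - 1) * csqrt (z + 1))

lemma csqrt_sq (w : ℂ) : csqrt w ^ 2 = w := by
  by_cases hw : w = 0
  · simp [csqrt, hw, Complex.zero_cpow (by norm_num : (1 : ℂ) / 2 ≠ 0)]
  · have : csqrt w ^ 2 = csqrt w * csqrt w := sq (csqrt w)
    rw [this, csqrt, ← Complex.cpow_add _ _ hw]
    norm_num

theorem psi_vertex_relation (x y z μ ν sx sy sz : ℂ)
    (hμ : μ = x ^ 2 + y ^ 2 + z ^ 2 - x * y * z)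
    (hν : ν = carccosh (1 - μ / 2))
    (h0 : μ ≠ 0) (h4 : μ ≠ 4)
    (hx : x ^ 2 ≠ μ) (hy : y ^ 2 ≠ μ) (hz : z ^ 2 ≠ μ)
    (hsx : sx ^ 2 = x ^ 2 - μ) (hsy : sy ^ 2 = y ^ 2 - μ)
    (hsz : sz ^ 2 = z ^ 2 - μ) :
    ∃ k : ℤ,
      Complex.log ((y * z + (Complex.exp ν - 1) * x) / (sy * sz)) +
        Complex.log ((z * x + (Complex.exp ν - 1) * y) / (sz * sx)) +
        Complex.log ((x * y + (Complex.exp ν - 1) * z) / (sx * sy)) =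
      ν + 2 * Real.pi * Complex.I * k := by
  set t : ℂ := Complex.exp ν with htdef
  have ht0 : t ≠ 0 := Complex.exp_ne_zero ν
  -- t satisfies the quadratic t^2 - (2 - μ) t + 1 = 0
  have ht : t ^ 2 - (2 - μ) * t + 1 = 0 := by
    set a : ℂ := 1 - μ / 2 with ha
    set s : ℂ := csqrt (a - 1) * csqrt (a + 1) with hsdef
    have hs : s ^ 2 = (a - 1) * (a + 1) := by
      rw [hsdef, mul_pow, csqrt_sq, csqrt_sq]
    have has : a + s ≠ 0 := by
      intro h
      have h1 : (1 : ℂ) = 0 := by linear_combination hs - (s - a) * h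
      exact one_ne_zero h1
    have hexp : t = a + s := by
      rw [htdef, hν, carccosh, Complex.exp_log has]
    rw [hexp]
    linear_combination hs + 2 * (a + s) * ha
  subst hμ
  -- names for the three numerators
  have hxm : x ^ 2 - (x ^ 2 + y ^ 2 + z ^ 2 - x * y * z) ≠ 0 := sub_ne_zero.mpr hx
  have hym : y ^ 2 - (x ^ 2 + y ^ 2 + z ^ 2 - x * y * z) ≠ 0 := sub_ne_zero.mpr hy
  have hzm : z ^ 2 - (x ^ 2 + y ^ 2 + z ^ 2 - x * y * z) ≠ 0 := sub_ne_zero.mpr hz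
  have hsx0 : sx ≠ 0 := by
    intro h; rw [h] at hsx; exact hxm (by simpa using hsx.symm)
  have hsy0 : sy ≠ 0 := by
    intro h; rw [h] at hsy; exact hym (by simpa using hsy.symm)
  have hsz0 : sz ≠ 0 := by
    intro h; rw [h] at hsz; exact hzm (by simpa using hsz.symm)
  set M : ℂ := x ^ 2 + y ^ 2 + z ^ 2 - x * y * z with hM
  -- key algebraic identity
  have hkey : (y * z + (t - 1) * x) * ((z * x + (t - 1) * y) * (x * y + (t - 1) * z)) =
      t * ((x ^ 2 - M) * ((y ^ 2 - M) * (z ^ 2 - M))) := by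
    linear_combination (x * y * z * t + x ^ 2 * y ^ 2 + y ^ 2 * z ^ 2 + x ^ 2 * z ^ 2
      - 3 * x * y * z + x * y * z * (2 - M)) * ht
  have hkey2 : (y * z + (t - 1) * x) * ((z * x + (t - 1) * y) * (x * y + (t - 1) * z)) =
      t * (sx ^ 2 * (sy ^ 2 * sz ^ 2)) := by
    rw [hsx, hsy, hsz]; exact hkey
  have hprod0 : (y * z + (t - 1) * x) * ((z * x + (t - 1) * y) * (x * y + (t - 1) * z)) ≠ 0 := by
    rw [hkey2]
    exact mul_ne_zero ht0 (mul_ne_zero (pow_ne_zero _ hsx0)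
      (mul_ne_zero (pow_ne_zero _ hsy0) (pow_ne_zero _ hsz0)))
  have hA : y * z + (t - 1) * x ≠ 0 := fun h => hprod0 (by rw [h]; ring)
  have hB : z * x + (t - 1) * y ≠ 0 := fun h => hprod0 (by rw [h]; ring)
  have hC : x * y + (t - 1) * z ≠ 0 := fun h => hprod0 (by rw [h]; ring)
  have hf1 : (y * z + (t - 1) * x) / (sy * sz) ≠ 0 := div_ne_zero hA (mul_ne_zero hsy0 hsz0)
  have hf2 : (z * x + (t - 1) * y) / (sz * sx) ≠ 0 := div_ne_zero hB (mul_ne_zero hsz0 hsx0)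
  have hf3 : (x * y + (t - 1) * z) / (sx * sy) ≠ 0 := div_ne_zero hC (mul_ne_zero hsx0 hsy0)
  have hE : Complex.exp
      (Complex.log ((y * z + (t - 1) * x) / (sy * sz)) +
        Complex.log ((z * x + (t - 1) * y) / (sz * sx)) +
        Complex.log ((x * y + (t - 1) * z) / (sx * sy))) = Complex.exp ν := by
    rw [Complex.exp_add, Complex.exp_add, Complex.exp_log hf1, Complex.exp_log hf2,
      Complex.exp_log hf3, ← htdef]
    field_simp
    linear_combination hkey2
  rw [Complex.exp_eq_exp_iff_exists_int] at hE
  obtain ⟨k, hk⟩ := hE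
  exact ⟨k, by rw [hk]; ring⟩
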